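/- For every k ≥ 1 there exist two distinct partitions of n = k²+2k−1 with identical sets of k-deletions; hence the bound n ≥ k²+2k in the reconstruction theorem is sharp. -/

import Mathlib

/-- A partition: a nonincreasing sequence of naturals (rows indexed from 0),
with finitely many nonzero parts. -/
def IsPartition (f : ℕ → ℕ) : Prop :=
  (∀ ⦃i j : ℕ⦄, i ≤ j → f j ≤ f i) ∧ {i | f i ≠ 0}.Finite

/-- The number of cells of a partition. -/
noncomputable def psize (f : ℕ → ℕ) : ℕ := ∑ᶠ i, f i

/-- `δ` is a `k`-deletion of `f`: a partition contained in `f` with `k` fewer cells. -/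
def IsDeletion (k : ℕ) (δ f : ℕ → ℕ) : Prop :=
  IsPartition δ ∧ (∀ i, δ i ≤ f i) ∧ psize f = psize δ + k

/-- The conjugate: `conj f c` is the number of cells in (0-indexed) column `c`. -/
noncomputable def conj (f : ℕ → ℕ) (c : ℕ) : ℕ := Set.ncard {i | c < f i}

/-!
Take μ = ((k+1)^k, k−1) and λ = ((k+1)^(k−1), k, k). They agree except in rows k−1 and k
(0-indexed), where each is one cell longer than the other. A k-deletion δ of either has
n − k = k² + k − 1 cells. If δ did not fit inside the other partition, it would have a row of
length ≥ k + 1 at index k − 1 or a row of length ≥ k at index k; being a partition, it would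
then contain a k × (k+1) rectangle, i.e. k² + k cells, one too many.
-/

open Finset

lemma psize_eq_sum_range {f : ℕ → ℕ} {n : ℕ} (h : ∀ i, n ≤ i → f i = 0) :
    psize f = ∑ i ∈ range n, f i :=
  finsum_eq_sum_of_support_subset f fun i hi => by
    simpa using not_le.1 fun hn => hi (h i hn)

namespace IsPartition

variable {f : ℕ → ℕ}

lemma sum_range_le_psize (hf : IsPartition f) (n : ℕ) : ∑ i ∈ range n, f i ≤ psize f := by
  rw [psize, finsum_eq_sum_of_support_subset f (s := range n ∪ hf.2.toFinset)
    fun i hi => by simp_all [Function.mem_support]]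
  exact sum_le_sum_of_subset subset_union_left

lemma mul_le_psize (hf : IsPartition f) {m c : ℕ} (h : c ≤ f m) : (m + 1) * c ≤ psize f :=
  calc (m + 1) * c = ∑ _i ∈ range (m + 1), c := by simp
    _ ≤ ∑ i ∈ range (m + 1), f i :=
      sum_le_sum fun i hi => h.trans (hf.1 (Nat.lt_succ_iff.1 (mem_range.1 hi)))
    _ ≤ psize f := hf.sum_range_le_psize _

end IsPartition

namespace IsDeletion

variable {k : ℕ} {δ f g : ℕ → ℕ}

lemma le_of_forall_lt (hδ : IsDeletion k δ f)
    (hg : ∀ i, g i < f i → psize f < (i + 1) * (g i + 1) + k) (i : ℕ) : δ i ≤ g i := by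
  by_contra! hlt
  have hrect := hδ.1.mul_le_psize (c := g i + 1) hlt
  have hbound := hg i (hlt.trans_le (hδ.2.1 i))
  have hsize := hδ.2.2
  omega

lemma of_psize_eq_of_forall_lt (hδ : IsDeletion k δ f) (hsize : psize g = psize f)
    (hg : ∀ i, g i < f i → psize f < (i + 1) * (g i + 1) + k) : IsDeletion k δ g :=
  ⟨hδ.1, hδ.le_of_forall_lt hg, hsize.trans hδ.2.2⟩

end IsDeletion

theorem isDeletion_iff_of_psize_eq {k : ℕ} {f g : ℕ → ℕ} (hsize : psize f = psize g)
    (hfg : ∀ i, g i < f i → psize f < (i + 1) * (g i + 1) + k)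
    (hgf : ∀ i, f i < g i → psize g < (i + 1) * (f i + 1) + k) (δ : ℕ → ℕ) :
    IsDeletion k δ f ↔ IsDeletion k δ g :=
  ⟨fun h => h.of_psize_eq_of_forall_lt hsize.symm hfg,
    fun h => h.of_psize_eq_of_forall_lt hsize hgf⟩

def twoBlock (a b c d : ℕ) (i : ℕ) : ℕ :=
  if i < a then b else if i < a + c then d else 0

section twoBlock

variable {a b c d : ℕ}

lemma twoBlock_of_lt {i : ℕ} (hi : i < a) : twoBlock a b c d i = b :=
  if_pos hi

lemma twoBlock_of_le_of_lt {i : ℕ} (ha : a ≤ i) (hc : i < a + c) : twoBlock a b c d i = d := by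
  unfold twoBlock; split_ifs <;> omega

lemma twoBlock_eq_zero {i : ℕ} (hi : a + c ≤ i) : twoBlock a b c d i = 0 := by
  unfold twoBlock; split_ifs <;> omega

lemma isPartition_twoBlock (h : d ≤ b) : IsPartition (twoBlock a b c d) :=
  ⟨fun i j hij => by unfold twoBlock; split_ifs <;> omega,
    (Set.finite_Iio (a + c)).subset fun i hi => not_le.1 fun h => hi (twoBlock_eq_zero h)⟩

lemma psize_twoBlock : psize (twoBlock a b c d) = a * b + c * d := by
  rw [psize_eq_sum_range fun i => twoBlock_eq_zero, sum_range_add,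
    sum_congr rfl fun i hi => twoBlock_of_lt (mem_range.1 hi),
    sum_congr rfl fun i hi => twoBlock_of_le_of_lt (by omega) (by simpa using mem_range.1 hi)]
  simp

end twoBlock

/-- For every k ≥ 1 there are two distinct partitions of k²+2k−1 with identical
sets of k-deletions: the bound n ≥ k²+2k is sharp. -/
theorem bound_sharp (k : ℕ) (hk : 1 ≤ k) :
    ∃ f g : ℕ → ℕ, IsPartition f ∧ IsPartition g ∧ f ≠ g ∧
      psize f = k ^ 2 + 2 * k - 1 ∧ psize g = k ^ 2 + 2 * k - 1 ∧
      (∀ δ : ℕ → ℕ, IsDeletion k δ f ↔ IsDeletion k δ g) := by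
  obtain ⟨j, rfl⟩ : ∃ j, k = j + 1 := ⟨k - 1, by omega⟩
  have hsize : (j + 1) * (j + 2) + 1 * j = (j + 1) ^ 2 + 2 * (j + 1) - 1 := by ring_nf; omega
  have hsize' : j * (j + 2) + 2 * (j + 1) = (j + 1) ^ 2 + 2 * (j + 1) - 1 := by ring_nf; omega
  refine ⟨twoBlock (j + 1) (j + 2) 1 j, twoBlock j (j + 2) 2 (j + 1),
    isPartition_twoBlock (by omega), isPartition_twoBlock (by omega), fun h => ?_,
    psize_twoBlock.trans hsize, psize_twoBlock.trans hsize',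
    isDeletion_iff_of_psize_eq (by rw [psize_twoBlock, psize_twoBlock, hsize, hsize']) ?_ ?_⟩
  · simpa [twoBlock] using congrFun h (j + 1)
  · intro i hi
    obtain rfl : i = j := by unfold twoBlock at hi; split_ifs at hi <;> omega
    rw [psize_twoBlock, twoBlock_of_le_of_lt le_rfl (by omega)]
    nlinarith
  · intro i hi
    obtain rfl : i = j + 1 := by unfold twoBlock at hi; split_ifs at hi <;> omega
    rw [psize_twoBlock, twoBlock_of_le_of_lt le_rfl (by omega)]
    nlinarith
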